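/- arXiv:1503.03603 — 2 statements merged into one kernel-verified Lean document; each statement's English description precedes it below -/
import Mathlib

section
/- Let α ∈ ℕ^n and let I ⊂ S = K[x_1,…,x_n] be a monomial ideal. Then I is weakly polymatroidal (with respect to some ordering of the variables of S) if and only if its expansion I^α ⊂ S^α is weakly polymatroidal (with respect to some ordering of the variables of S^α). -/
/-!
Statement 1: a monomial ideal `I ⊆ K[x₁,…,xₙ]` is weakly polymatroidal (with
respect to some ordering of the variables) iff its expansion `I^α` is weakly
polymatroidal (with respect to some ordering of the variables of `S^α`).
A monomial ideal is encoded by its (finite, nonempty) minimal monomial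
generating set `B` of exponent vectors; membership of a monomial in the ideal
means divisibility by some generator.  An ordering of the variables is encoded
by a bijection `e` of the variables with `Fin (card σ)`, the variable in
position `0` being the largest.
-/

/-- `π₀`: sum the exponents over the copies of each variable. -/
def pi0 {σ : Type*} [Fintype σ] (α : σ → ℕ) (w : ((i : σ) × Fin (α i)) → ℕ) : σ → ℕ :=
  fun i => ∑ j : Fin (α i), w ⟨i, j⟩

/-- The expansion of a set of exponent vectors with respect to `α`. -/
def expandSet {σ : Type*} [Fintype σ] (α : σ → ℕ) (B : Set (σ → ℕ)) :
    Set (((i : σ) × Fin (α i)) → ℕ) := {w | pi0 α w ∈ B}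

/-- The exponent vector of `x_j · (u / x_i)`, i.e. `u - ε_i + ε_j`. -/
def expSwap {σ : Type*} [DecidableEq σ] (u : σ → ℕ) (i j : σ) : σ → ℕ :=
  fun s => u s - (if s = i then 1 else 0) + (if s = j then 1 else 0)

/-- The monomial ideal with minimal generating set `B` is weakly polymatroidal
with respect to the linear ordering of the variables given by the bijection
`e : σ ≃ Fin (card σ)` (position `0` = largest variable): whenever `u, v ∈ B`
agree on all variables larger than `x_t` and `u` has a larger exponent at
`x_t`, there is a smaller variable `x_j` dividing `v` such that the monomial
`x_t (v / x_j)` lies in the ideal, i.e. is divisible by some generator. -/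
def WeaklyPolymatroidalWrt {σ : Type*} [Fintype σ] [DecidableEq σ]
    (B : Set (σ → ℕ)) (e : σ ≃ Fin (Fintype.card σ)) : Prop :=
  ∀ u ∈ B, ∀ v ∈ B, ∀ t : σ,
    (∀ s : σ, e s < e t → u s = v s) → v t < u t →
      ∃ j : σ, e t < e j ∧ 0 < v j ∧ ∃ w ∈ B, w ≤ expSwap v j t

/-- A monomial ideal is weakly polymatroidal if it is weakly polymatroidal with
respect to some ordering of the variables. -/
def WeaklyPolymatroidal {σ : Type*} [Fintype σ] [DecidableEq σ] (B : Set (σ → ℕ)) : Prop :=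
  ∃ e : σ ≃ Fin (Fintype.card σ), WeaklyPolymatroidalWrt B e

lemma exists_rank_equiv {τ : Type*} [Fintype τ] [DecidableEq τ] {β : Type*} [LinearOrder β]
    (f : τ → β) (hf : Function.Injective f) :
    ∃ e : τ ≃ Fin (Fintype.card τ), ∀ a b, e a < e b ↔ f a < f b := by
  classical
  set T : Finset β := Finset.univ.image f with hT
  have hcard : T.card = Fintype.card τ := by
    rw [hT, Finset.card_image_of_injective _ hf, Finset.card_univ]
  let o : Fin (Fintype.card τ) ≃o T := T.orderIsoOfFin hcard
  have hg : Function.Bijective (fun a : τ => (⟨f a, by simp [hT]⟩ : T)) := by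
    constructor
    · intro a b h
      exact hf (congrArg Subtype.val h)
    · rintro ⟨x, hx⟩
      rw [hT, Finset.mem_image] at hx
      obtain ⟨a, -, rfl⟩ := hx
      exact ⟨a, rfl⟩
  let g : τ ≃ T := Equiv.ofBijective _ hg
  refine ⟨g.trans o.symm.toEquiv, fun a b => ?_⟩
  show o.symm (g a) < o.symm (g b) ↔ _
  rw [o.symm.lt_iff_lt]
  exact Subtype.mk_lt_mk

lemma sum_ite_point {n : ℕ} (α : Fin n → ℕ) (a : (i : Fin n) × Fin (α i)) (i : Fin n) (c : ℕ) :
    ∑ r : Fin (α i), (if (⟨i, r⟩ : (i : Fin n) × Fin (α i)) = a then c else 0)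
      = if i = a.1 then c else 0 := by
  obtain ⟨i₁, r₁⟩ := a
  by_cases h : i = i₁
  · subst h
    simp
  · rw [Finset.sum_eq_zero, if_neg h]
    intro r _
    exact if_neg (fun hh => h (congrArg Sigma.fst hh))

lemma pi0_expSwap {n : ℕ} (α : Fin n → ℕ) (v : ((i : Fin n) × Fin (α i)) → ℕ)
    (a b : (i : Fin n) × Fin (α i)) (hv : 0 < v a) :
    pi0 α (expSwap v a b) = expSwap (pi0 α v) a.1 b.1 := by
  funext i
  have hg : ∀ r ∈ (Finset.univ : Finset (Fin (α i))),
      (if (⟨i, r⟩ : (i : Fin n) × Fin (α i)) = a then 1 else 0) ≤ v ⟨i, r⟩ := by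
    intro r _
    split
    · next h => rw [h]; exact hv
    · exact Nat.zero_le _
  show (∑ r : Fin (α i), expSwap v a b ⟨i, r⟩) = _
  unfold expSwap
  rw [Finset.sum_add_distrib, Finset.sum_tsub_distrib _ hg, sum_ite_point, sum_ite_point]
  rfl

lemma expSwap_self {σ : Type*} [DecidableEq σ] (x : σ → ℕ) (t : σ) (h : 0 < x t) :
    expSwap x t t = x := by
  funext s
  unfold expSwap
  by_cases hs : s = t
  · subst hs; rw [if_pos rfl]; omega
  · simp [hs]

lemma pi0_mono {n : ℕ} {α : Fin n → ℕ} {X Y : ((i : Fin n) × Fin (α i)) → ℕ} (h : X ≤ Y) :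
    pi0 α X ≤ pi0 α Y :=
  fun i => Finset.sum_le_sum (fun r _ => h ⟨i, r⟩)

lemma pi0_spike {n : ℕ} {α : Fin n → ℕ} (r₀ : ∀ i, Fin (α i)) (u : Fin n → ℕ) :
    pi0 α (fun a => if a.2 = r₀ a.1 then u a.1 else 0) = u := by
  funext i
  simp [pi0]

lemma exists_le_sum_eq {F : Type*} [DecidableEq F] (s : Finset F) (c : F → ℕ) (m : ℕ)
    (h : m ≤ ∑ i ∈ s, c i) :
    ∃ d : F → ℕ, (∀ i, d i ≤ c i) ∧ ∑ i ∈ s, d i = m := by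
  induction s using Finset.induction_on generalizing m with
  | empty =>
    simp only [Finset.sum_empty, Nat.le_zero] at h
    exact ⟨fun _ => 0, fun _ => Nat.zero_le _, by simp [h]⟩
  | @insert a s ha ih =>
    rw [Finset.sum_insert ha] at h
    have h2 : m - min m (c a) ≤ ∑ i ∈ s, c i := by omega
    obtain ⟨d, hd, hds⟩ := ih _ h2
    refine ⟨fun i => if i = a then min m (c a) else d i, ?_, ?_⟩
    · intro i
      by_cases hi : i = a
      · subst hi; simp only [if_pos rfl]; exact min_le_right _ _
      · simpa [hi] using hd i
    · rw [Finset.sum_insert ha, if_pos rfl]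
      have : ∑ i ∈ s, (if i = a then min m (c a) else d i) = ∑ i ∈ s, d i :=
        Finset.sum_congr rfl fun i hi => if_neg (fun h' => ha (by rwa [h'] at hi))
      rw [this, hds]
      omega

lemma exists_lift {n : ℕ} {α : Fin n → ℕ} (X : ((i : Fin n) × Fin (α i)) → ℕ) (w : Fin n → ℕ)
    (hw : ∀ i, w i ≤ pi0 α X i) :
    ∃ W, W ≤ X ∧ pi0 α W = w := by
  have h : ∀ i : Fin n, ∃ d : Fin (α i) → ℕ, (∀ r, d r ≤ X ⟨i, r⟩) ∧ ∑ r, d r = w i := by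
    intro i
    obtain ⟨d, hd, hds⟩ := exists_le_sum_eq Finset.univ (fun r => X ⟨i, r⟩) (w i) (hw i)
    exact ⟨d, fun r => hd r, hds⟩
  choose d hd hds using h
  refine ⟨fun a => d a.1 a.2, fun a => hd a.1 a.2, funext fun i => ?_⟩
  simpa [pi0] using hds i

theorem weaklyPolymatroidal_iff_expansion_weaklyPolymatroidal
    (n : ℕ) (K : Type*) [Field K] (α : Fin n → ℕ) (hα : ∀ i, 0 < α i)
    (B : Set (Fin n → ℕ)) (hne : B.Nonempty) (hfin : B.Finite)
    (hmin : IsAntichain (· ≤ ·) B) :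
    WeaklyPolymatroidal B ↔ WeaklyPolymatroidal (expandSet α B) := by
  classical
  constructor
  · rintro ⟨e, he⟩
    have hinj : Function.Injective
        (fun a : (i : Fin n) × Fin (α i) => toLex ((e a.1), (a.2 : ℕ))) := by
      rintro ⟨i, r⟩ ⟨i', r'⟩ h
      simp only [toLex_inj, Prod.mk.injEq] at h
      obtain ⟨h1, h2⟩ := h
      have hi : i = i' := e.injective h1
      subst hi
      have hr : r = r' := Fin.ext h2
      subst hr
      rfl
    obtain ⟨e', he'⟩ := exists_rank_equiv _ hinj
    have hlt' : ∀ a b : (i : Fin n) × Fin (α i),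
        e' a < e' b ↔ (e a.1 < e b.1 ∨ (a.1 = b.1 ∧ (a.2 : ℕ) < (b.2 : ℕ))) := by
      intro a b
      rw [he', Prod.Lex.lt_iff]
      simp [e.apply_eq_iff_eq]
    refine ⟨e', ?_⟩
    rintro U hU V hV ⟨t, r⟩ hag hlt
    by_cases hA : ∃ r' : Fin (α t), (r : ℕ) < (r' : ℕ) ∧ 0 < V ⟨t, r'⟩
    · obtain ⟨r', hr', hV0⟩ := hA
      refine ⟨⟨t, r'⟩, (hlt' _ _).2 (Or.inr ⟨rfl, hr'⟩), hV0,
        expSwap V ⟨t, r'⟩ ⟨t, r⟩, ?_, le_refl _⟩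
      show pi0 α _ ∈ B
      rw [pi0_expSwap α V ⟨t, r'⟩ ⟨t, r⟩ hV0]
      have h1 : 0 < pi0 α V t :=
        lt_of_lt_of_le hV0 (Finset.single_le_sum (f := fun s => V ⟨t, s⟩)
          (fun _ _ => Nat.zero_le _) (Finset.mem_univ r'))
      rw [expSwap_self _ _ h1]
      exact hV
    · push_neg at hA
      have hzero : ∀ r' : Fin (α t), (r : ℕ) < (r' : ℕ) → V ⟨t, r'⟩ = 0 := by
        intro r' h'
        have := hA r' h'
        omega
      have hab : ∀ s : Fin n, e s < e t → pi0 α U s = pi0 α V s := by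
        intro s hs
        refine Finset.sum_congr rfl fun rr _ => hag ⟨s, rr⟩ ((hlt' _ _).2 (Or.inl hs))
      have hbt : pi0 α V t < pi0 α U t := by
        refine Finset.sum_lt_sum (fun s _ => ?_) ⟨r, Finset.mem_univ r, hlt⟩
        rcases lt_trichotomy (s : ℕ) (r : ℕ) with h | h | h
        · exact le_of_eq (hag ⟨t, s⟩ ((hlt' _ _).2 (Or.inr ⟨rfl, h⟩))).symm
        · have hs : s = r := Fin.ext h
          subst hs
          exact le_of_lt hlt
        · rw [hzero s h]
          exact Nat.zero_le _
      obtain ⟨j, hj, hbj, w, hw, hwle⟩ := he (pi0 α U) hU (pi0 α V) hV t hab hbt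
      have hm : ∃ m : Fin (α j), 0 < V ⟨j, m⟩ := by
        by_contra hc
        push_neg at hc
        have h0 : pi0 α V j = 0 := Finset.sum_eq_zero fun m _ => by
          have := hc m; omega
        omega
      obtain ⟨m, hm⟩ := hm
      have hXle : w ≤ pi0 α (expSwap V ⟨j, m⟩ ⟨t, r⟩) := by
        rw [pi0_expSwap α V ⟨j, m⟩ ⟨t, r⟩ hm]
        exact hwle
      obtain ⟨W, hWle, hWpi⟩ := exists_lift _ w hXle
      refine ⟨⟨j, m⟩, (hlt' _ _).2 (Or.inl hj), hm, W, ?_, hWle⟩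
      show pi0 α W ∈ B
      rw [hWpi]
      exact hw
  · rintro ⟨e', he'⟩
    have hminj : Function.Injective (fun i : Fin n => e' ⟨i, ⟨0, hα i⟩⟩) := by
      intro i j h
      exact congrArg Sigma.fst (e'.injective h)
    obtain ⟨e, he⟩ := exists_rank_equiv _ hminj
    refine ⟨e, ?_⟩
    intro u hu v hv t hag hvt
    set U : ((i : Fin n) × Fin (α i)) → ℕ :=
      fun a => if a.2 = ⟨0, hα a.1⟩ then u a.1 else 0 with hUdef
    set V : ((i : Fin n) × Fin (α i)) → ℕ :=
      fun a => if a.2 = ⟨0, hα a.1⟩ then v a.1 else 0 with hVdef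
    have hpU : pi0 α U = u := pi0_spike (fun i => ⟨0, hα i⟩) u
    have hpV : pi0 α V = v := pi0_spike (fun i => ⟨0, hα i⟩) v
    have hUm : U ∈ expandSet α B := by
      show pi0 α U ∈ B
      rw [hpU]; exact hu
    have hVm : V ∈ expandSet α B := by
      show pi0 α V ∈ B
      rw [hpV]; exact hv
    have hagree' : ∀ s', e' s' < e' ⟨t, ⟨0, hα t⟩⟩ → U s' = V s' := by
      rintro ⟨s, rr⟩ hs'
      by_cases hrr : rr = ⟨0, hα s⟩
      · subst hrr
        show (if _ then u s else 0) = (if _ then v s else 0)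
        rw [if_pos rfl, if_pos rfl]
        exact hag s ((he s t).2 hs')
      · show (if _ then u s else 0) = (if _ then v s else 0)
        rw [if_neg hrr, if_neg hrr]
    have hltV : V ⟨t, ⟨0, hα t⟩⟩ < U ⟨t, ⟨0, hα t⟩⟩ := by
      show (if _ then v t else 0) < (if _ then u t else 0)
      rw [if_pos rfl, if_pos rfl]
      exact hvt
    obtain ⟨⟨j, mm⟩, hj'gt, hVj', w', hw', hwle'⟩ :=
      he' U hUm V hVm ⟨t, ⟨0, hα t⟩⟩ hagree' hltV
    have hmm : mm = ⟨0, hα j⟩ := by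
      by_contra hc
      rw [show V ⟨j, mm⟩ = 0 from if_neg hc] at hVj'
      exact lt_irrefl 0 hVj'
    subst hmm
    have hvj : 0 < v j := by
      rwa [show V ⟨j, ⟨0, hα j⟩⟩ = v j from if_pos rfl] at hVj'
    have hle : pi0 α w' ≤ expSwap v j t := by
      have h1 : pi0 α w' ≤ pi0 α (expSwap V ⟨j, ⟨0, hα j⟩⟩ ⟨t, ⟨0, hα t⟩⟩) :=
        pi0_mono hwle'
      rwa [pi0_expSwap α V _ _ hVj', hpV] at h1
    exact ⟨j, (he t j).2 hj'gt, hvj, pi0 α w', hw', hle⟩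
end

section
/- Let α ∈ ℕ^n and let A = {u_1,…,u_m} be a set of monomials in S = K[x_1,…,x_n] minimal with respect to divisibility. Then dim(K[A]) ≤ dim(K[A^α]), where dim denotes Krull dimension. -/
open MvPolynomial

noncomputable def toricRing (K : Type*) [Field K] {σ : Type*} [Fintype σ]
    (A : Set (σ → ℕ)) : Subalgebra K (MvPolynomial σ K) :=
  Algebra.adjoin K ((fun u => monomial (Finsupp.equivFunOnFinite.symm u) (1 : K)) '' A)

lemma pi0_surj_on {σ : Type*} [Fintype σ] [DecidableEq σ] (α : σ → ℕ) (hα : ∀ i, 0 < α i)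
    (u : σ → ℕ) : ∃ w, pi0 α w = u := by
  refine ⟨fun p => if p.2 = ⟨0, hα p.1⟩ then u p.1 else 0, ?_⟩
  funext i
  rw [pi0]
  dsimp only
  rw [Fintype.sum_eq_single ⟨0, hα i⟩ (by intro j hj; simp [hj])]
  simp

lemma mapDomain_fst {σ : Type*} [Fintype σ] [DecidableEq σ] (α : σ → ℕ)
    (w : ((i : σ) × Fin (α i)) → ℕ) :
    Finsupp.mapDomain (Sigma.fst) (Finsupp.equivFunOnFinite.symm w) =
      Finsupp.equivFunOnFinite.symm (pi0 α w) := by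
  ext i
  rw [Finsupp.mapDomain, Finsupp.sum_fintype]
  · rw [Finset.sum_apply']
    simp only [Finsupp.single_apply, Finsupp.coe_equivFunOnFinite_symm, pi0]
    rw [← Finset.univ_sigma_univ, Finset.sum_sigma]
    rw [Finset.sum_eq_single i]
    · simp
    · intro b _ hb
      apply Finset.sum_eq_zero
      intro j _
      exact if_neg hb
    · simp
  · intro a; simp

theorem krullDim_toricRing_le_krullDim_expansion
    (n : ℕ) (K : Type*) [Field K] (α : Fin n → ℕ) (hα : ∀ i, 0 < α i)
    (A : Set (Fin n → ℕ)) (hne : A.Nonempty) (hfin : A.Finite)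
    (hmin : IsAntichain (· ≤ ·) A) :
    ringKrullDim (toricRing K A) ≤ ringKrullDim (toricRing K (expandSet α A)) := by
  set f : MvPolynomial ((i : Fin n) × Fin (α i)) K →ₐ[K] MvPolynomial (Fin n) K :=
    rename Sigma.fst with hf
  have himg : (toricRing K (expandSet α A)).map f = toricRing K A := by
    rw [toricRing, toricRing, ← Algebra.adjoin_image]
    congr 1
    rw [← Set.image_comp]
    ext p
    constructor
    · rintro ⟨w, hw, rfl⟩
      exact ⟨pi0 α w, hw, by simp [hf, Function.comp, rename_monomial, mapDomain_fst]⟩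
    · rintro ⟨u, hu, rfl⟩
      obtain ⟨w, hw⟩ := pi0_surj_on α hα u
      exact ⟨w, by simp [expandSet, hw, hu], by
        simp [hf, Function.comp, rename_monomial, mapDomain_fst, hw]⟩
  have hsurj : Function.Surjective
      ((f.comp (toricRing K (expandSet α A)).val).codRestrict
        ((toricRing K (expandSet α A)).map f) (fun x => ⟨x, x.2, rfl⟩)) := by
    rintro ⟨y, x, hx, rfl⟩
    exact ⟨⟨x, hx⟩, rfl⟩
  have := ringKrullDim_le_of_surjective _ hsurj
  rw [himg] at this
  exact this
end
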